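/- For symmetric positive definite matrices Λ and Γ = (1 + 1/T)Λ + (tr Λ / T) I on ℝ^d, the operator norm of I − Γ^{-1}Λ satisfies ‖I − Γ^{-1}Λ‖_op ≤ (λ_min(Λ) + tr Λ)/(T λ_min(Λ) + tr Λ). -/

import Mathlib

attribute [local instance] Matrix.instL2OpNormedAddCommGroup Matrix.instL2OpNormedRing
attribute [local instance] Matrix.instCStarRing

open Matrix in
lemma diag_norm_le {d : ℕ} (v : Fin d → ℝ) (c : ℝ) (hc : 0 ≤ c) (h : ∀ i, |v i| ≤ c) :
    ‖Matrix.diagonal v‖ ≤ c := by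
  rw [Matrix.l2_opNorm_def]
  refine ContinuousLinearMap.opNorm_le_bound _ hc fun x => ?_
  simp only [LinearEquiv.trans_apply, LinearMap.coe_toContinuousLinearMap']
  rw [Matrix.toEuclideanLin_apply]
  have hx : ‖WithLp.toLp 2 (diagonal v *ᵥ x.ofLp)‖
      = Real.sqrt (∑ i, (v i * x i)^2) := by
    rw [EuclideanSpace.norm_eq]
    congr 1
    refine Finset.sum_congr rfl fun i _ => ?_
    simp only [Matrix.mulVec_diagonal, Real.norm_eq_abs, WithLp.ofLp_toLp]
    rw [sq_abs]
  rw [hx, EuclideanSpace.norm_eq]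
  have h2 : ∀ i : Fin d, ‖x i‖ ^ 2 = (x i)^2 := fun i => by
    simp [Real.norm_eq_abs, sq_abs]
  simp_rw [h2]
  have key : ∑ i, (v i * x i)^2 ≤ c^2 * ∑ i, (x i)^2 := by
    rw [Finset.mul_sum]
    refine Finset.sum_le_sum fun i _ => ?_
    have h1 := h i
    have h3 := abs_nonneg (v i)
    have : (v i * x i)^2 = |v i|^2 * (x i)^2 := by rw [← sq_abs (v i * x i), abs_mul, mul_pow, sq_abs (x i)]
    rw [this]
    have : |v i|^2 ≤ c^2 := by nlinarith
    nlinarith [sq_nonneg (x i)]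
  calc Real.sqrt (∑ i, (v i * x i)^2) ≤ Real.sqrt (c^2 * ∑ i, (x i)^2) :=
        Real.sqrt_le_sqrt key
    _ = c * Real.sqrt (∑ i, (x i)^2) := by
        rw [Real.sqrt_mul (sq_nonneg c), Real.sqrt_sq hc]

theorem gamma_inv_lambda_bound (d T : ℕ) (hd : 0 < d) (hT : 0 < T)
    (Λ : Matrix (Fin d) (Fin d) ℝ) (hΛ : Λ.PosDef) :
    ‖(1 : Matrix (Fin d) (Fin d) ℝ) -
        ((1 + 1 / (T : ℝ)) • Λ + (Λ.trace / (T : ℝ)) • 1)⁻¹ * Λ‖ ≤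
      ((⨅ i, hΛ.1.eigenvalues i) + Λ.trace) /
        ((T : ℝ) * (⨅ i, hΛ.1.eigenvalues i) + Λ.trace) := by
  classical
  haveI : Nonempty (Fin d) := ⟨⟨0, hd⟩⟩
  set v : Fin d → ℝ := hΛ.1.eigenvalues with hv
  set s := Λ.trace with hs
  set t := (T : ℝ) with ht
  set lm := ⨅ i, v i with hlm
  set U : Matrix (Fin d) (Fin d) ℝ :=
    (Matrix.IsHermitian.eigenvectorUnitary hΛ.1 : Matrix (Fin d) (Fin d) ℝ) with hUdef
  have hU1 : U * star U = 1 :=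
    Matrix.mem_unitaryGroup_iff.mp (Matrix.IsHermitian.eigenvectorUnitary hΛ.1).2
  have hU2 : star U * U = 1 :=
    Matrix.mem_unitaryGroup_iff'.mp (Matrix.IsHermitian.eigenvectorUnitary hΛ.1).2
  have hcomp : (RCLike.ofReal ∘ v : Fin d → ℝ) = v := by funext i; simp
  have hspec : Λ = U * Matrix.diagonal v * star U := by
    have := hΛ.1.spectral_theorem
    rwa [hcomp] at this
  have hpos : ∀ i, 0 < v i := fun i => hΛ.eigenvalues_pos i
  have htrace : s = ∑ i, v i := by
    rw [hs, hspec, Matrix.trace_mul_cycle, hU2, one_mul, Matrix.trace_diagonal]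
  have hs_pos : 0 < s := by
    rw [htrace]; exact Finset.sum_pos (fun i _ => hpos i) Finset.univ_nonempty
  have hvle : ∀ i, v i ≤ s := fun i => by
    rw [htrace]; exact Finset.single_le_sum (fun j _ => (hpos j).le) (Finset.mem_univ i)
  obtain ⟨i0, hi0⟩ := exists_eq_ciInf_of_finite (f := v)
  have hlm_pos : 0 < lm := by rw [hlm, ← hi0]; exact hpos i0
  have hlm_le : ∀ i, lm ≤ v i := fun i => ciInf_le (Finite.bddBelow_range v) i
  have ht1 : 1 ≤ t := by rw [ht]; exact_mod_cast hT
  have ht0 : 0 < t := lt_of_lt_of_le one_pos ht1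
  set γ : Fin d → ℝ := fun i => (1 + 1/t) * v i + s/t with hγ
  have hγpos : ∀ i, 0 < γ i := fun i => by
    have h1 := hpos i; have := hs_pos
    simp only [hγ]
    positivity
  -- conjugation multiplication key
  have key : ∀ D1 D2 : Matrix (Fin d) (Fin d) ℝ,
      (U * D1 * star U) * (U * D2 * star U) = U * (D1 * D2) * star U := by
    intro D1 D2
    simp only [mul_assoc]
    rw [← mul_assoc (star U) U (D2 * star U), hU2, one_mul]
  -- Γ as conjugated diagonal
  have hΓ : (1 + 1/t) • Λ + (s/t) • (1 : Matrix (Fin d) (Fin d) ℝ)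
      = U * Matrix.diagonal γ * star U := by
    have h1 : Matrix.diagonal γ
        = (1 + 1/t) • Matrix.diagonal v + (s/t) • (1 : Matrix (Fin d) (Fin d) ℝ) := by
      ext i j
      rcases eq_or_ne i j with rfl | hij
      · simp [hγ, Matrix.one_apply_eq]
      · simp [Matrix.diagonal_apply_ne _ hij, Matrix.one_apply_ne hij]
    rw [h1, Matrix.mul_add, Matrix.add_mul, Matrix.mul_smul, Matrix.smul_mul,
      Matrix.mul_smul, Matrix.smul_mul, mul_one, hU1, hspec]
  set Γ := (1 + 1/t) • Λ + (s/t) • (1 : Matrix (Fin d) (Fin d) ℝ) with hΓdef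
  have hrinv : Γ * (U * Matrix.diagonal (fun i => (γ i)⁻¹) * star U) = 1 := by
    rw [hΓ, key, Matrix.diagonal_mul_diagonal]
    have : (fun i => γ i * (γ i)⁻¹) = fun _ => (1:ℝ) := by
      funext i; exact mul_inv_cancel₀ (hγpos i).ne'
    rw [this, Matrix.diagonal_one, mul_one, hU1]
  have hinv : Γ⁻¹ = U * Matrix.diagonal (fun i => (γ i)⁻¹) * star U :=
    Matrix.inv_eq_right_inv hrinv
  set g : Fin d → ℝ := fun i => 1 - (γ i)⁻¹ * v i with hg
  have h2 : Γ⁻¹ * Λ = U * Matrix.diagonal (fun i => (γ i)⁻¹ * v i) * star U := by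
    rw [hinv]
    conv_lhs => rw [hspec]
    rw [key, Matrix.diagonal_mul_diagonal]
  have hM : (1 : Matrix (Fin d) (Fin d) ℝ) - Γ⁻¹ * Λ = U * Matrix.diagonal g * star U := by
    have hdg : Matrix.diagonal g
        = 1 - Matrix.diagonal (fun i => (γ i)⁻¹ * v i) := by
      ext i j
      rcases eq_or_ne i j with rfl | hij
      · simp [hg, Matrix.one_apply_eq]
      · simp [Matrix.diagonal_apply_ne _ hij, Matrix.one_apply_ne hij]
    rw [hdg, Matrix.mul_sub, Matrix.sub_mul, mul_one, hU1, h2]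
  -- norms of unitaries
  haveI : Nontrivial (EuclideanSpace ℝ (Fin d)) := inferInstance
  have hone : ‖(1 : Matrix (Fin d) (Fin d) ℝ)‖ = 1 := by
    rw [Matrix.cstar_norm_def, map_one, norm_one]
  have hnormU : ‖U‖ = 1 := by
    have h := CStarRing.norm_star_mul_self (x := U)
    rw [hU2, hone] at h
    nlinarith [norm_nonneg U]
  have hnormsU : ‖star U‖ = 1 := by
    rw [Matrix.star_eq_conjTranspose, Matrix.l2_opNorm_conjTranspose, hnormU]
  -- bound each diagonal entry
  set c := (lm + s) / (t * lm + s) with hc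
  have hden_pos : 0 < t * lm + s := by positivity
  have hc0 : 0 ≤ c := by positivity
  have hbound : ∀ i, |g i| ≤ c := by
    intro i
    have hγi := hγpos i
    have hden2 : (0:ℝ) < (t + 1) * v i + s := by
      have := hpos i; nlinarith
    have heq : g i = (v i + s) / ((t + 1) * v i + s) := by
      simp only [hg, hγ]
      rw [eq_div_iff hden2.ne']
      have hγine : (1 + 1/t) * v i + s/t ≠ 0 := by
        simp only [hγ] at hγi; exact hγi.ne'
      field_simp
      ring
    rw [heq, abs_of_nonneg (div_nonneg (by nlinarith [hpos i] : (0:ℝ) ≤ v i + s) hden2.le), hc,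
      div_le_div_iff₀ hden2 hden_pos]
    nlinarith [mul_nonneg (mul_nonneg ht0.le hs_pos.le) (sub_nonneg.2 (hlm_le i)),
      mul_pos hlm_pos (hpos i), mul_pos hlm_pos hs_pos, hvle i]
  -- conclude
  calc ‖(1 : Matrix (Fin d) (Fin d) ℝ) - Γ⁻¹ * Λ‖
      = ‖U * Matrix.diagonal g * star U‖ := by rw [hM]
    _ ≤ ‖U * Matrix.diagonal g‖ * ‖star U‖ := Matrix.l2_opNorm_mul _ _
    _ ≤ ‖U‖ * ‖Matrix.diagonal g‖ * ‖star U‖ :=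
        mul_le_mul_of_nonneg_right (Matrix.l2_opNorm_mul _ _) (norm_nonneg _)
    _ = ‖Matrix.diagonal g‖ := by rw [hnormU, hnormsU, one_mul, mul_one]
    _ ≤ c := diag_norm_le g c hc0 hbound
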